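/- Under hypotheses (H₁)–(H₄) (g ∈ L¹, |f(t,u)| ≤ H_R(t) for |u| ≤ R with H_R ∈ L^∞, ‖H_R‖_∞(M₁+M₂) ≤ R, and measurability of t ↦ f(t,u(t)) for u ∈ B̄_R), the image T(B̄_R) of the operator Tu(t) = ∫₀¹ k(t,s)g(s)f(s,u(s))ds is relatively compact in C¹([0,1]). -/

import Mathlib

open MeasureTheory intervalIntegral

/-- The Green's function for `u'' = 0` with separated boundary conditions. -/
noncomputable def greenK (α β γ δ : ℝ) (t s : ℝ) : ℝ :=
  if s ≤ t then (γ + δ - γ * t) * (β + α * s) / (γ * β + α * γ + α * δ)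
  else (β + α * t) * (γ + δ - γ * s) / (γ * β + α * γ + α * δ)

/-- The partial derivative `∂k/∂t` of the Green's function, defined piecewise. -/
noncomputable def greenKt (α β γ δ : ℝ) (t s : ℝ) : ℝ :=
  if s < t then (-γ) * (β + α * s) / (γ * β + α * γ + α * δ)
  else α * (γ + δ - γ * s) / (γ * β + α * γ + α * δ)

/-- The `C¹([0,1])` norm `‖u‖ = sup |u| + sup |u'|`. -/
noncomputable def normC1 (u : ℝ → ℝ) : ℝ :=
  sSup ((fun t => |u t|) '' Set.Icc (0 : ℝ) 1) +
    sSup ((fun t => |deriv u t|) '' Set.Icc (0 : ℝ) 1)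

/-- Membership in the closed ball `B̄_R` of `C¹([0,1])`. -/
noncomputable def memBallC1 (R : ℝ) (u : ℝ → ℝ) : Prop :=
  ContinuousOn u (Set.Icc (0 : ℝ) 1) ∧
  (∀ t ∈ Set.Icc (0 : ℝ) 1, DifferentiableAt ℝ u t) ∧
  ContinuousOn (deriv u) (Set.Icc (0 : ℝ) 1) ∧
  normC1 u ≤ R

/-- The constant `M₁ = sup_t ∫₀¹ k(t,s)|g(s)| ds`. -/
noncomputable def Mone (α β γ δ : ℝ) (g : ℝ → ℝ) : ℝ :=
  ⨆ t : Set.Icc (0 : ℝ) 1, ∫ s in (0 : ℝ)..1, greenK α β γ δ t s * |g s|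

/-- The constant `M₂ = sup_t ∫₀¹ |∂k/∂t(t,s)||g(s)| ds`. -/
noncomputable def Mtwo (α β γ δ : ℝ) (g : ℝ → ℝ) : ℝ :=
  ⨆ t : Set.Icc (0 : ℝ) 1, ∫ s in (0 : ℝ)..1, |greenKt α β γ δ t s| * |g s|

/-- The Hammerstein integral operator `Tu(t) = ∫₀¹ k(t,s) g(s) f(s,u(s)) ds`. -/
noncomputable def hammOp (α β γ δ : ℝ) (g : ℝ → ℝ) (f : ℝ → ℝ → ℝ)
    (u : ℝ → ℝ) : ℝ → ℝ :=
  fun t => ∫ s in (0 : ℝ)..1, greenK α β γ δ t s * g s * f s (u s)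

/-! For `u ∈ B̄_R` write `Tu(t) = ∫₀¹ k(t,s) h(s) ds` with `h = g · f(·, u)`, so `|h| ≤ C_H |g|` by
(H₂). The kernel `∂k/∂t` is bounded, say by `K`, and jumps only on the diagonal, so Fubini gives
`(Tu)'(t) = ∫₀¹ ∂k/∂t(t,s) h(s) ds`, with `|Tu| ≤ C_H M₁`, `|(Tu)'| ≤ C_H M₂` and
`|(Tu)'(a) - (Tu)'(b)| ≤ 2K C_H |∫ₐᵇ |g||`. The derivatives of a sequence in `T(B̄_R)` are thus
uniformly bounded and equicontinuous: Arzelà–Ascoli makes them converge uniformly along a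
subsequence, Bolzano–Weierstrass does the same for the values at `0`, and integrating the limit
derivative gives the `C¹` limit, of norm at most `C_H (M₁ + M₂) ≤ R` by (H₃). -/

open Set Filter Topology

section NormC1

theorem normC1_nonneg (u : ℝ → ℝ) : 0 ≤ normC1 u :=
  add_nonneg (Real.sSup_nonneg (by rintro _ ⟨t, -, rfl⟩; exact abs_nonneg _))
    (Real.sSup_nonneg (by rintro _ ⟨t, -, rfl⟩; exact abs_nonneg _))

theorem normC1_le {u : ℝ → ℝ} {a b : ℝ} (ha : ∀ t ∈ Icc (0 : ℝ) 1, |u t| ≤ a)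
    (hb : ∀ t ∈ Icc (0 : ℝ) 1, |deriv u t| ≤ b) : normC1 u ≤ a + b := by
  have hne : (Icc (0 : ℝ) 1).Nonempty := nonempty_Icc.mpr zero_le_one
  exact add_le_add (csSup_le (hne.image _) (by rintro _ ⟨t, ht, rfl⟩; exact ha t ht))
    (csSup_le (hne.image _) (by rintro _ ⟨t, ht, rfl⟩; exact hb t ht))

theorem abs_le_normC1 {u : ℝ → ℝ} (hu : ContinuousOn u (Icc (0 : ℝ) 1)) {t : ℝ}
    (ht : t ∈ Icc (0 : ℝ) 1) : |u t| ≤ normC1 u := by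
  have hbdd : BddAbove ((fun t => |u t|) '' Icc (0 : ℝ) 1) :=
    (isCompact_Icc.image_of_continuousOn hu.abs).bddAbove
  exact (le_csSup hbdd ⟨t, ht, rfl⟩).trans
    (le_add_of_nonneg_right (Real.sSup_nonneg (by rintro _ ⟨t, -, rfl⟩; exact abs_nonneg _)))

theorem normC1_le_of_abs_deriv_le {u : ℝ → ℝ} {ε : ℝ}
    (hu : ∀ t ∈ Icc (0 : ℝ) 1, DifferentiableAt ℝ u t)
    (hε : ∀ t ∈ Icc (0 : ℝ) 1, |deriv u t| ≤ ε) : normC1 u ≤ |u 0| + ε + ε := by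
  refine normC1_le (fun t ht => ?_) hε
  have hmvt := (convex_Icc (0 : ℝ) 1).norm_image_sub_le_of_norm_deriv_le hu hε
    (left_mem_Icc.mpr zero_le_one) ht
  simp only [Real.norm_eq_abs, sub_zero, abs_of_nonneg ht.1] at hmvt
  have hε0 : 0 ≤ ε := (abs_nonneg _).trans (hε t ht)
  linarith [abs_sub_abs_le_abs_sub (u t) (u 0), mul_le_of_le_one_right hε0 ht.2]

theorem memBallC1.mono {R R' : ℝ} {u : ℝ → ℝ} (hu : memBallC1 R u) (hR : R ≤ R') :
    memBallC1 R' u :=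
  ⟨hu.1, hu.2.1, hu.2.2.1, hu.2.2.2.trans hR⟩

theorem abs_le_of_memBallC1 {R : ℝ} {u : ℝ → ℝ} (hu : memBallC1 R u) {t : ℝ}
    (ht : t ∈ Icc (0 : ℝ) 1) : |u t| ≤ R :=
  (abs_le_normC1 hu.1 ht).trans hu.2.2.2

end NormC1

section Compactness

theorem equicontinuous_of_abs_sub_le {ι X : Type*} [TopologicalSpace X] {F : ι → X → ℝ}
    {G : X → ℝ} {C : ℝ} (hG : Continuous G) (hFG : ∀ i a b, |F i a - F i b| ≤ C * |G a - G b|) :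
    Equicontinuous F := by
  intro x₀
  rw [Metric.equicontinuousAt_iff_right]
  intro ε hε
  have hC : 0 < |C| + 1 := by positivity
  filter_upwards [Metric.tendsto_nhds.mp (hG.tendsto x₀) (ε / (|C| + 1)) (by positivity)]
    with x hx i
  rw [Real.dist_eq] at hx ⊢
  calc |F i x₀ - F i x| ≤ C * |G x₀ - G x| := hFG i x₀ x
    _ ≤ |C| * |G x₀ - G x| := mul_le_mul_of_nonneg_right (le_abs_self C) (abs_nonneg _)
    _ ≤ |C| * (ε / (|C| + 1)) := by rw [abs_sub_comm (G x₀)]; gcongr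
    _ < ε := by rw [mul_div_assoc', div_lt_iff₀ hC]; nlinarith [abs_nonneg C]

theorem exists_subseq_tendstoUniformlyOn_Icc {F : ℕ → ℝ → ℝ} {a b B : ℝ} (hab : a ≤ b)
    (hF : Equicontinuous fun n (x : Icc a b) => F n x)
    (hFB : ∀ n, ∀ t ∈ Icc a b, |F n t| ≤ B) :
    ∃ φ : ℕ → ℕ, ∃ W : ℝ → ℝ, StrictMono φ ∧ Continuous W ∧
      TendstoUniformlyOn (fun n => F (φ n)) W atTop (Icc a b) := by
  have : CompactSpace (Icc a b) := isCompact_iff_compactSpace.mp isCompact_Icc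
  set P : ℕ → BoundedContinuousFunction (Icc a b) ℝ := fun n =>
    BoundedContinuousFunction.mkOfCompact ⟨fun x => F n x, hF.continuous n⟩
  have hP : IsCompact (closure (range P)) := by
    have hrange : (fun f : range P => ⇑(f : BoundedContinuousFunction (Icc a b) ℝ)) =
        (fun n (x : Icc a b) => F n x) ∘ rangeSplitting P := by
      ext f x
      conv_lhs => rw [← apply_rangeSplitting P f]
      rfl
    refine BoundedContinuousFunction.arzela_ascoli (Icc (-B) B) isCompact_Icc _ ?_
      (hrange ▸ hF.comp _)
    rintro _ x ⟨n, rfl⟩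
    exact abs_le.mp (hFB n x x.2)
  obtain ⟨W₀, -, φ, hφ, hlim⟩ := hP.tendsto_subseq fun n => subset_closure (mem_range_self n)
  refine ⟨φ, fun t => W₀ (projIcc a b hab t), hφ, W₀.continuous.comp continuous_projIcc, ?_⟩
  have hW : (fun t => W₀ (projIcc a b hab t)) ∘ Subtype.val = W₀ := by
    ext x
    simp only [Function.comp_apply, projIcc_val]
  rw [tendstoUniformlyOn_iff_tendstoUniformly_comp_coe, hW]
  exact BoundedContinuousFunction.tendsto_iff_tendstoUniformly.mp hlim

theorem tendsto_normC1_sub_of_tendstoUniformlyOn {v D : ℕ → ℝ → ℝ} {w W : ℝ → ℝ}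
    (hv : ∀ n, ∀ t ∈ Icc (0 : ℝ) 1, HasDerivAt (v n) (D n t) t)
    (hw : ∀ t ∈ Icc (0 : ℝ) 1, HasDerivAt w (W t) t)
    (hv0 : Tendsto (fun n => v n 0) atTop (𝓝 (w 0)))
    (hD : TendstoUniformlyOn D W atTop (Icc (0 : ℝ) 1)) :
    Tendsto (fun n => normC1 fun t => v n t - w t) atTop (𝓝 0) := by
  refine tendsto_order.mpr ⟨fun a ha => Eventually.of_forall fun n => ha.trans_le
    (normC1_nonneg _), fun a ha => ?_⟩
  have hε : 0 < a / 3 := by positivity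
  filter_upwards [Metric.tendstoUniformlyOn_iff.mp hD _ hε,
    Metric.tendsto_nhds.mp hv0 _ hε] with n hDn hvn
  have hderiv : ∀ t ∈ Icc (0 : ℝ) 1, HasDerivAt (fun t => v n t - w t) (D n t - W t) t :=
    fun t ht => (hv n t ht).sub (hw t ht)
  have hle := normC1_le_of_abs_deriv_le (u := fun t => v n t - w t) (ε := a / 3)
    (fun t ht => (hderiv t ht).differentiableAt)
    (fun t ht => by rw [(hderiv t ht).deriv, abs_sub_comm]; exact (hDn t ht).le)
  rw [Real.dist_eq] at hvn
  linarith

theorem exists_subseq_tendsto_normC1 {v D : ℕ → ℝ → ℝ} {G : ℝ → ℝ} {A B C : ℝ}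
    (hG : ContinuousOn G (Icc (0 : ℝ) 1))
    (hv : ∀ n, ∀ t ∈ Icc (0 : ℝ) 1, HasDerivAt (v n) (D n t) t)
    (hvA : ∀ n, ∀ t ∈ Icc (0 : ℝ) 1, |v n t| ≤ A)
    (hDB : ∀ n, ∀ t ∈ Icc (0 : ℝ) 1, |D n t| ≤ B)
    (hDG : ∀ n, ∀ a ∈ Icc (0 : ℝ) 1, ∀ b ∈ Icc (0 : ℝ) 1, |D n a - D n b| ≤ C * |G a - G b|) :
    ∃ φ : ℕ → ℕ, ∃ w : ℝ → ℝ, StrictMono φ ∧ memBallC1 (A + B) w ∧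
      Tendsto (fun n => normC1 fun t => v (φ n) t - w t) atTop (𝓝 0) := by
  obtain ⟨c, -, φ₁, hφ₁, hc⟩ := tendsto_subseq_of_bounded (Metric.isBounded_Icc (-A) A)
    fun n => abs_le.mp (hvA n 0 (left_mem_Icc.mpr zero_le_one))
  obtain ⟨φ₂, W, hφ₂, hW, hDW⟩ := exists_subseq_tendstoUniformlyOn_Icc zero_le_one
    (equicontinuous_of_abs_sub_le hG.domRestrict fun n a b => hDG (φ₁ n) a a.2 b b.2)
    fun n => hDB (φ₁ n)
  set w : ℝ → ℝ := fun t => c + ∫ r in (0 : ℝ)..t, W r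
  have hw : ∀ t, HasDerivAt w (W t) t := fun t =>
    (hW.integral_hasStrictDerivAt 0 t).hasDerivAt.const_add c
  have hlim : Tendsto (fun n => normC1 fun t => v (φ₁ (φ₂ n)) t - w t) atTop (𝓝 0) :=
    tendsto_normC1_sub_of_tendstoUniformlyOn (fun n => hv (φ₁ (φ₂ n))) (fun t _ => hw t)
      (by simpa [w, Function.comp_def] using hc.comp hφ₂.tendsto_atTop) hDW
  have hwA : ∀ t ∈ Icc (0 : ℝ) 1, |w t| ≤ A := by
    intro t ht
    have hvw : Tendsto (fun n => v (φ₁ (φ₂ n)) t) atTop (𝓝 (w t)) := by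
      refine tendsto_iff_norm_sub_tendsto_zero.mpr (squeeze_zero (fun _ => norm_nonneg _)
        (fun n => abs_le_normC1 (u := fun t => v (φ₁ (φ₂ n)) t - w t) ?_ ht) hlim)
      exact fun t ht => ((hv _ t ht).continuousAt.sub (hw t).continuousAt).continuousWithinAt
    exact le_of_tendsto' hvw.abs fun n => hvA _ t ht
  have hWB : ∀ t ∈ Icc (0 : ℝ) 1, |deriv w t| ≤ B := fun t ht => by
    rw [(hw t).deriv]
    exact le_of_tendsto' (hDW.tendsto_at ht).abs fun n => hDB _ t ht
  have hw' : deriv w = W := funext fun t => (hw t).deriv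
  refine ⟨φ₁ ∘ φ₂, w, hφ₁.comp hφ₂, ⟨fun t _ => (hw t).continuousAt.continuousWithinAt,
    fun t _ => (hw t).differentiableAt, hw' ▸ hW.continuousOn, normC1_le hwA hWB⟩, hlim⟩

end Compactness

section Calculus

theorem hasDerivAt_of_sub_eq_integral {F f : ℝ → ℝ} (hf : Continuous f)
    (hF : ∀ a b, a ≤ b → F b - F a = ∫ r in a..b, f r) (t : ℝ) : HasDerivAt F (f t) t := by
  have hF0 : F = fun t => F 0 + ∫ r in (0 : ℝ)..t, f r := by
    ext t
    rcases le_total 0 t with ht | ht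
    · linarith [hF 0 t ht]
    · linarith [hF t 0 ht, intervalIntegral.integral_symm (μ := volume) (f := f) 0 t]
  rw [hF0]
  exact (hf.integral_hasStrictDerivAt 0 t).hasDerivAt.const_add _

theorem integral_integral_mul_swap {X Y : Type*} [MeasurableSpace X] [MeasurableSpace Y]
    {μ : Measure X} {ν : Measure Y} [SFinite μ] [IsFiniteMeasure ν] {κ : Y → X → ℝ}
    {h : X → ℝ} {K : ℝ} (hκ : Measurable (Function.uncurry κ))
    (hK : ∀ᵐ x ∂μ, ∀ y, |κ y x| ≤ K) (hh : Integrable h μ) :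
    ∫ x, (∫ y, κ y x ∂ν) * h x ∂μ = ∫ y, ∫ x, κ y x * h x ∂μ ∂ν := by
  have hprod : Integrable (Function.uncurry fun x y => κ y x * h x) (μ.prod ν) := by
    refine Integrable.mono' ((hh.norm.const_mul K).comp_fst ν)
      ((hκ.comp measurable_swap).aestronglyMeasurable.mul hh.1.comp_fst) ?_
    filter_upwards [Measure.quasiMeasurePreserving_fst.ae hK] with p hp
    rw [Function.uncurry_apply_pair, norm_mul, Real.norm_eq_abs]
    exact mul_le_mul_of_nonneg_right (hp p.2) (norm_nonneg _)
  simp_rw [← MeasureTheory.integral_mul_const]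
  exact integral_integral_swap hprod

end Calculus

section Green

variable {α β γ δ : ℝ}

theorem greenK_eq_min_max (α β γ δ t s : ℝ) :
    greenK α β γ δ t s =
      (β + α * min t s) * (γ + δ - γ * max t s) / (γ * β + α * γ + α * δ) := by
  unfold greenK
  split_ifs with h
  · rw [min_eq_right h, max_eq_left h]; ring
  · rw [min_eq_left (not_le.mp h).le, max_eq_right (not_le.mp h).le]

theorem continuous_greenK (α β γ δ : ℝ) :
    Continuous fun p : ℝ × ℝ => greenK α β γ δ p.1 p.2 := by
  simp only [greenK_eq_min_max]; fun_prop

theorem greenK_nonneg (hα : 0 ≤ α) (hβ : 0 ≤ β) (hγ : 0 ≤ γ) (hδ : 0 ≤ δ)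
    (hΓ : 0 < γ * β + α * γ + α * δ) {t s : ℝ} (ht : t ∈ Icc (0 : ℝ) 1)
    (hs : s ∈ Icc (0 : ℝ) 1) : 0 ≤ greenK α β γ δ t s := by
  rw [greenK_eq_min_max]
  have hmin : 0 ≤ min t s := le_min ht.1 hs.1
  have hmax : max t s ≤ 1 := max_le ht.2 hs.2
  apply div_nonneg _ hΓ.le
  apply mul_nonneg (by positivity)
  nlinarith

theorem exists_abs_greenK_le (α β γ δ : ℝ) :
    ∃ K, ∀ t ∈ Icc (0 : ℝ) 1, ∀ s ∈ Icc (0 : ℝ) 1, |greenK α β γ δ t s| ≤ K := by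
  obtain ⟨K, hK⟩ := (isCompact_Icc.prod isCompact_Icc).exists_bound_of_continuousOn
    (continuous_greenK α β γ δ).continuousOn
  exact ⟨K, fun t ht s hs => hK (t, s) ⟨ht, hs⟩⟩

theorem exists_abs_greenKt_le (α β γ δ : ℝ) :
    ∃ K, ∀ r, ∀ s ∈ Icc (0 : ℝ) 1, |greenKt α β γ δ r s| ≤ K := by
  set Γ := γ * β + α * γ + α * δ
  obtain ⟨K, hK⟩ := (isCompact_Icc (a := (0 : ℝ)) (b := 1)).exists_bound_of_continuousOn
    (f := fun s => |(-γ) * (β + α * s) / Γ| + |α * (γ + δ - γ * s) / Γ|) (by fun_prop)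
  refine ⟨K, fun r s hs => le_trans ?_ ((le_abs_self _).trans (hK s hs))⟩
  unfold greenKt
  split_ifs
  · exact le_add_of_nonneg_right (abs_nonneg _)
  · exact le_add_of_nonneg_left (abs_nonneg _)

theorem measurable_greenKt (α β γ δ : ℝ) :
    Measurable fun p : ℝ × ℝ => greenKt α β γ δ p.1 p.2 :=
  Measurable.ite (measurableSet_lt measurable_snd measurable_fst) (by fun_prop) (by fun_prop)

theorem hasDerivAt_greenK_of_ne {r s : ℝ} (hrs : r ≠ s) :
    HasDerivAt (fun t => greenK α β γ δ t s) (greenKt α β γ δ r s) r := by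
  set Γ := γ * β + α * γ + α * δ
  rcases hrs.lt_or_gt with hr | hr
  · have hlin : HasDerivAt (fun t => (β + α * t) * (γ + δ - γ * s) / Γ)
        (α * (γ + δ - γ * s) / Γ) r := by
      simpa using (((hasDerivAt_id r).const_mul α).const_add β).mul_const (γ + δ - γ * s)
        |>.div_const Γ
    rw [greenKt, if_neg hr.not_gt]
    refine hlin.congr_of_eventuallyEq ?_
    filter_upwards [Iio_mem_nhds hr] with t ht
    rw [greenK, if_neg (not_le.mpr ht)]
  · have hlin : HasDerivAt (fun t => (γ + δ - γ * t) * (β + α * s) / Γ)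
        ((-γ) * (β + α * s) / Γ) r := by
      simpa using (((hasDerivAt_id r).const_mul γ).const_sub (γ + δ)).mul_const (β + α * s)
        |>.div_const Γ
    rw [greenKt, if_pos hr]
    refine hlin.congr_of_eventuallyEq ?_
    filter_upwards [Ioi_mem_nhds hr] with t ht
    rw [greenK, if_pos (le_of_lt ht)]

theorem integral_greenKt (α β γ δ s t₁ t₂ : ℝ) :
    ∫ r in t₁..t₂, greenKt α β γ δ r s = greenK α β γ δ t₂ s - greenK α β γ δ t₁ s := by
  refine MeasureTheory.integral_eq_of_hasDerivAt_off_countable _ _ (countable_singleton s)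
    ((continuous_greenK α β γ δ).comp (continuous_id.prodMk continuous_const)).continuousOn
    (fun r hr => hasDerivAt_greenK_of_ne hr.2) ?_
  refine (intervalIntegrable_const (c := |(-γ) * (β + α * s) / (γ * β + α * γ + α * δ)|
    + |α * (γ + δ - γ * s) / (γ * β + α * γ + α * δ)|)).mono_fun'
    ((measurable_greenKt α β γ δ).comp (measurable_id.prodMk measurable_const)).aestronglyMeasurable
    (ae_of_all _ fun r => ?_)
  dsimp only [greenKt, Real.norm_eq_abs]
  split_ifs
  · exact le_add_of_nonneg_right (abs_nonneg _)
  · exact le_add_of_nonneg_left (abs_nonneg _)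

theorem greenKt_eq_of_notMem_Ico {s t₁ t₂ : ℝ} (h12 : t₁ ≤ t₂) (hs : s ∉ Ico t₁ t₂) :
    greenKt α β γ δ t₂ s = greenKt α β γ δ t₁ s := by
  rw [mem_Ico, not_and_or, not_le, not_lt] at hs
  unfold greenKt
  rcases hs with hs | hs
  · rw [if_pos (hs.trans_le h12), if_pos hs]
  · rw [if_neg hs.not_gt, if_neg (h12.trans hs).not_gt]

end Green

section KernelOp

noncomputable def kernelOp (κ : ℝ → ℝ → ℝ) (h : ℝ → ℝ) (t : ℝ) : ℝ :=
  ∫ s in Ioc (0 : ℝ) 1, κ t s * h s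

theorem hammOp_eq_kernelOp (α β γ δ : ℝ) (g : ℝ → ℝ) (f : ℝ → ℝ → ℝ) (u : ℝ → ℝ) :
    hammOp α β γ δ g f u = kernelOp (greenK α β γ δ) fun s => g s * f s (u s) := by
  ext t
  simp only [hammOp, kernelOp, integral_of_le zero_le_one, mul_assoc]

theorem abs_kernelOp_le {κ : ℝ → ℝ → ℝ} {h g : ℝ → ℝ} {c t : ℝ}
    (hκg : IntegrableOn (fun s => |κ t s| * |g s|) (Ioc (0 : ℝ) 1))
    (hhg : ∀ᵐ s ∂volume.restrict (Ioc (0 : ℝ) 1), |h s| ≤ c * |g s|) :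
    |kernelOp κ h t| ≤ c * ∫ s in Ioc (0 : ℝ) 1, |κ t s| * |g s| := by
  rw [← MeasureTheory.integral_const_mul, ← Real.norm_eq_abs]
  refine norm_integral_le_of_norm_le (hκg.const_mul c) ?_
  filter_upwards [hhg] with s hs
  rw [Real.norm_eq_abs, abs_mul]
  nlinarith [abs_nonneg (κ t s)]

theorem bddAbove_range_integral_mul_abs {κ : ℝ → ℝ → ℝ} {g : ℝ → ℝ} {K : ℝ}
    (hκ : ∀ t, Measurable (κ t)) (hK : ∀ t ∈ Icc (0 : ℝ) 1, ∀ s ∈ Icc (0 : ℝ) 1, |κ t s| ≤ K)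
    (hg : IntegrableOn g (Icc (0 : ℝ) 1)) :
    BddAbove (range fun t : Icc (0 : ℝ) 1 => ∫ s in (0 : ℝ)..1, κ t s * |g s|) := by
  have hg' : IntegrableOn (fun s => |g s|) (Ioc (0 : ℝ) 1) := (hg.mono_set Ioc_subset_Icc_self).abs
  refine ⟨K * ∫ s in Ioc (0 : ℝ) 1, |g s|, ?_⟩
  rintro _ ⟨t, rfl⟩
  dsimp only
  rw [integral_of_le zero_le_one, ← MeasureTheory.integral_const_mul]
  refine integral_mono_ae (hg'.bdd_mul (c := K) (hκ t).aestronglyMeasurable ?_)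
    (hg'.const_mul K) ?_ <;> filter_upwards [ae_restrict_mem measurableSet_Ioc] with s hs
  · exact hK t t.2 s (Ioc_subset_Icc_self hs)
  · exact mul_le_mul_of_nonneg_right ((le_abs_self _).trans (hK t t.2 s (Ioc_subset_Icc_self hs)))
      (abs_nonneg _)

variable {α β γ δ : ℝ} {g h : ℝ → ℝ} {c : ℝ}

theorem kernelOp_greenK_sub (hh : IntegrableOn h (Ioc (0 : ℝ) 1)) {t₁ t₂ : ℝ} (h12 : t₁ ≤ t₂) :
    kernelOp (greenK α β γ δ) h t₂ - kernelOp (greenK α β γ δ) h t₁ =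
      ∫ r in t₁..t₂, kernelOp (greenKt α β γ δ) h r := by
  obtain ⟨K, hK⟩ := exists_abs_greenKt_le α β γ δ
  have hint : ∀ t, IntegrableOn (fun s => greenK α β γ δ t s * h s) (Ioc (0 : ℝ) 1) := fun t =>
    hh.continuousOn_mul_of_subset
      ((continuous_greenK α β γ δ).comp (continuous_const.prodMk continuous_id)).continuousOn
      isCompact_Icc measurableSet_Ioc Ioc_subset_Icc_self
  have hfub := integral_integral_mul_swap (ν := volume.restrict (Ioc t₁ t₂)) (K := K)
    (κ := greenKt α β γ δ) (measurable_greenKt α β γ δ) ?_ hh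
  · rw [kernelOp, kernelOp, ← integral_sub (hint t₂) (hint t₁), integral_of_le h12]
    refine Eq.trans (integral_congr_ae (ae_of_all _ fun s => ?_)) hfub
    simp only [← integral_of_le h12, integral_greenKt, sub_mul]
  · filter_upwards [ae_restrict_mem measurableSet_Ioc] with s hs r
    exact hK r s (Ioc_subset_Icc_self hs)

-- `∂k/∂t(·, s)` jumps only at `t = s`, so `(Tu)'(a) - (Tu)'(b)` only sees `s` between `a` and `b`.
theorem abs_kernelOp_greenKt_sub_le {K : ℝ}
    (hK : ∀ r, ∀ s ∈ Icc (0 : ℝ) 1, |greenKt α β γ δ r s| ≤ K)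
    (hh : IntegrableOn h (Ioc (0 : ℝ) 1)) (hg : IntegrableOn g (Ioc (0 : ℝ) 1))
    (hhg : ∀ᵐ s ∂volume.restrict (Ioc (0 : ℝ) 1), |h s| ≤ c * |g s|) (a b : ℝ) :
    |kernelOp (greenKt α β γ δ) h a - kernelOp (greenKt α β γ δ) h b| ≤
      2 * K * |∫ x in a..b, (Ioc (0 : ℝ) 1).indicator (fun s => c * |g s|) x| := by
  wlog hab : a ≤ b generalizing a b
  · rw [abs_sub_comm, integral_symm, abs_neg]
    exact this b a (le_of_not_ge hab)
  have hK0 : 0 ≤ K := (abs_nonneg _).trans (hK 0 0 (left_mem_Icc.mpr zero_le_one))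
  have hint : ∀ r, IntegrableOn (fun s => greenKt α β γ δ r s * h s) (Ioc (0 : ℝ) 1) := fun r =>
    hh.bdd_mul ((measurable_greenKt α β γ δ).comp measurable_prodMk_left).aestronglyMeasurable
      ((ae_restrict_mem measurableSet_Ioc).mono fun s hs => hK r s (Ioc_subset_Icc_self hs))
  set ρ : ℝ → ℝ := fun s => 2 * K * (c * |g s|)
  have hρ : IntegrableOn ((Icc a b).indicator ρ) (Ioc (0 : ℝ) 1) :=
    (hg.abs.const_mul c |>.const_mul (2 * K)).indicator measurableSet_Icc
  have hpt : ∀ᵐ s ∂volume.restrict (Ioc (0 : ℝ) 1),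
      ‖(greenKt α β γ δ b s - greenKt α β γ δ a s) * h s‖ ≤ (Icc a b).indicator ρ s := by
    filter_upwards [hhg, ae_restrict_mem measurableSet_Ioc] with s hs hs01
    rw [Real.norm_eq_abs, abs_mul]
    by_cases hsab : s ∈ Icc a b
    · rw [indicator_of_mem hsab]
      have hdiff : |greenKt α β γ δ b s - greenKt α β γ δ a s| ≤ 2 * K := by
        have := abs_sub (greenKt α β γ δ b s) (greenKt α β γ δ a s)
        linarith [hK b s (Ioc_subset_Icc_self hs01), hK a s (Ioc_subset_Icc_self hs01)]
      exact mul_le_mul hdiff hs (abs_nonneg _) (by positivity)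
    · rw [indicator_of_notMem hsab,
        greenKt_eq_of_notMem_Ico hab fun hs' => hsab (Ico_subset_Icc_self hs'), sub_self, abs_zero,
        zero_mul]
  calc |kernelOp (greenKt α β γ δ) h a - kernelOp (greenKt α β γ δ) h b|
      = ‖∫ s in Ioc (0 : ℝ) 1, (greenKt α β γ δ b s - greenKt α β γ δ a s) * h s‖ := by
        rw [abs_sub_comm, kernelOp, kernelOp, ← integral_sub (hint b) (hint a),
          Real.norm_eq_abs]
        simp only [sub_mul]
    _ ≤ ∫ s in Ioc (0 : ℝ) 1, (Icc a b).indicator ρ s := norm_integral_le_of_norm_le hρ hpt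
    _ = 2 * K * ∫ x in a..b, (Ioc (0 : ℝ) 1).indicator (fun s => c * |g s|) x := by
        rw [setIntegral_indicator measurableSet_Icc, inter_comm, ← setIntegral_indicator
          measurableSet_Ioc, integral_Icc_eq_integral_Ioc, ← integral_of_le hab,
          ← intervalIntegral.integral_const_mul]
        simp only [ρ, indicator_mul_right]
    _ ≤ _ := mul_le_mul_of_nonneg_left (le_abs_self _) (by positivity)

theorem abs_kernelOp_greenK_le_Mone (hα : 0 ≤ α) (hβ : 0 ≤ β) (hγ : 0 ≤ γ) (hδ : 0 ≤ δ)
    (hΓ : 0 < γ * β + α * γ + α * δ) (hg : IntegrableOn g (Icc (0 : ℝ) 1)) (hc : 0 ≤ c)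
    (hhg : ∀ᵐ s ∂volume.restrict (Ioc (0 : ℝ) 1), |h s| ≤ c * |g s|) {t : ℝ}
    (ht : t ∈ Icc (0 : ℝ) 1) : |kernelOp (greenK α β γ δ) h t| ≤ c * Mone α β γ δ g := by
  obtain ⟨K, hK⟩ := exists_abs_greenK_le α β γ δ
  have hk : ∀ t, Continuous (greenK α β γ δ t) := fun t =>
    (continuous_greenK α β γ δ).comp (continuous_const.prodMk continuous_id)
  have hint : IntegrableOn (fun s => |greenK α β γ δ t s| * |g s|) (Ioc (0 : ℝ) 1) :=
    IntegrableOn.continuousOn_mul_of_subset (hk t).abs.continuousOn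
      (hg.mono_set Ioc_subset_Icc_self).abs isCompact_Icc measurableSet_Ioc Ioc_subset_Icc_self
  refine (abs_kernelOp_le hint hhg).trans (mul_le_mul_of_nonneg_left ?_ hc)
  have hM := le_ciSup (bddAbove_range_integral_mul_abs (fun t => (hk t).measurable) hK hg)
    (⟨t, ht⟩ : Icc (0 : ℝ) 1)
  refine le_of_eq_of_le ?_ hM
  rw [integral_of_le zero_le_one]
  refine setIntegral_congr_fun measurableSet_Ioc fun s hs => ?_
  rw [abs_of_nonneg (greenK_nonneg hα hβ hγ hδ hΓ ht (Ioc_subset_Icc_self hs))]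

theorem abs_kernelOp_greenKt_le_Mtwo (hg : IntegrableOn g (Icc (0 : ℝ) 1)) (hc : 0 ≤ c)
    (hhg : ∀ᵐ s ∂volume.restrict (Ioc (0 : ℝ) 1), |h s| ≤ c * |g s|) {t : ℝ}
    (ht : t ∈ Icc (0 : ℝ) 1) : |kernelOp (greenKt α β γ δ) h t| ≤ c * Mtwo α β γ δ g := by
  obtain ⟨K, hK⟩ := exists_abs_greenKt_le α β γ δ
  have hk : ∀ t, Measurable fun s => |greenKt α β γ δ t s| := fun t =>
    ((measurable_greenKt α β γ δ).comp measurable_prodMk_left).abs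
  have hint : IntegrableOn (fun s => |greenKt α β γ δ t s| * |g s|) (Ioc (0 : ℝ) 1) :=
    (hg.mono_set Ioc_subset_Icc_self).abs.bdd_mul (hk t).aestronglyMeasurable
      ((ae_restrict_mem measurableSet_Ioc).mono fun s hs => by
        simpa using hK t s (Ioc_subset_Icc_self hs))
  refine (abs_kernelOp_le hint hhg).trans (mul_le_mul_of_nonneg_left ?_ hc)
  have hM := le_ciSup (bddAbove_range_integral_mul_abs (K := K) hk
    (fun t _ s hs => by simpa using hK t s hs) hg) (⟨t, ht⟩ : Icc (0 : ℝ) 1)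
  rwa [integral_of_le zero_le_one] at hM

end KernelOp

theorem nonneg_of_ae_restrict_abs_le {X : Type*} [MeasurableSpace X] {μ : Measure X} {S : Set X}
    {H : X → ℝ} {C : ℝ} (hS : μ S ≠ 0) (hHC : ∀ᵐ x ∂μ.restrict S, |H x| ≤ C) : 0 ≤ C := by
  have : (ae (μ.restrict S)).NeBot := ae_restrict_neBot.mpr hS
  obtain ⟨x, hx⟩ := hHC.exists
  exact (abs_nonneg _).trans hx

theorem ae_abs_mul_le_of_memBallC1 {g H u : ℝ → ℝ} {f : ℝ → ℝ → ℝ} {R CH : ℝ}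
    (hH : ∀ᵐ t ∂(volume.restrict (Icc (0 : ℝ) 1)), ∀ x ∈ Icc (-R) R, |f t x| ≤ H t)
    (hHC : ∀ᵐ t ∂(volume.restrict (Icc (0 : ℝ) 1)), |H t| ≤ CH) (hu : memBallC1 R u) :
    ∀ᵐ s ∂(volume.restrict (Ioc (0 : ℝ) 1)), |g s * f s (u s)| ≤ CH * |g s| := by
  refine ae_restrict_of_ae_restrict_of_subset Ioc_subset_Icc_self ?_
  filter_upwards [hH, hHC, ae_restrict_mem measurableSet_Icc] with s hfH hHs hs
  rw [abs_mul, mul_comm CH]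
  exact mul_le_mul_of_nonneg_left
    ((hfH _ (abs_le.mp (abs_le_of_memBallC1 hu hs))).trans ((le_abs_self _).trans hHs))
    (abs_nonneg _)

theorem integrableOn_mul_of_memBallC1 {g H u : ℝ → ℝ} {f : ℝ → ℝ → ℝ} {R CH : ℝ}
    (hg : IntegrableOn g (Icc (0 : ℝ) 1))
    (hH : ∀ᵐ t ∂(volume.restrict (Icc (0 : ℝ) 1)), ∀ x ∈ Icc (-R) R, |f t x| ≤ H t)
    (hHC : ∀ᵐ t ∂(volume.restrict (Icc (0 : ℝ) 1)), |H t| ≤ CH) (hu : memBallC1 R u)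
    (hfu : AEMeasurable (fun t => f t (u t)) (volume.restrict (Icc (0 : ℝ) 1))) :
    IntegrableOn (fun s => g s * f s (u s)) (Ioc (0 : ℝ) 1) :=
  have hg' : IntegrableOn g (Ioc (0 : ℝ) 1) := hg.mono_set Ioc_subset_Icc_self
  Integrable.mono' (hg'.abs.const_mul CH)
    (hg'.1.mul (hfu.mono_set Ioc_subset_Icc_self).aestronglyMeasurable)
    (ae_abs_mul_le_of_memBallC1 hH hHC hu)

theorem hammOp_image_relatively_compact_general
    (α β γ δ : ℝ) (hα : 0 ≤ α) (hβ : 0 ≤ β) (hγ : 0 ≤ γ) (hδ : 0 ≤ δ)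
    (hΓ : 0 < γ * β + α * γ + α * δ)
    (g : ℝ → ℝ) (f : ℝ → ℝ → ℝ) (R : ℝ)
    (H : ℝ → ℝ) (CH : ℝ)
    -- (H₁)
    (hg : IntegrableOn g (Set.Icc (0 : ℝ) 1))
    -- (H₂)
    (hH : ∀ᵐ t ∂(volume.restrict (Set.Icc (0 : ℝ) 1)),
      ∀ x ∈ Set.Icc (-R) R, |f t x| ≤ H t)
    (hHC : ∀ᵐ t ∂(volume.restrict (Set.Icc (0 : ℝ) 1)), |H t| ≤ CH)
    -- (H₃)
    (hRC : CH * (Mone α β γ δ g + Mtwo α β γ δ g) ≤ R)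
    -- (H₄)
    (hmeas : ∀ u : ℝ → ℝ, memBallC1 R u →
      AEMeasurable (fun t => f t (u t)) (volume.restrict (Set.Icc (0 : ℝ) 1))) :
    -- `T(B̄_R)` is relatively compact in `C¹([0,1])`: every sequence in the image
    -- has a subsequence converging in the `C¹` norm.
    ∀ v : ℕ → (ℝ → ℝ), (∀ n, ∃ u : ℝ → ℝ, memBallC1 R u ∧ v n = hammOp α β γ δ g f u) →
      ∃ (φ : ℕ → ℕ) (w : ℝ → ℝ), StrictMono φ ∧ memBallC1 R w ∧
        Filter.Tendsto (fun n => normC1 (fun t => v (φ n) t - w t))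
          Filter.atTop (nhds 0) := by
  intro v hv
  choose u hu hvu using hv
  set h : ℕ → ℝ → ℝ := fun n s => g s * f s (u n s)
  obtain rfl : v = fun n => kernelOp (greenK α β γ δ) (h n) :=
    funext fun n => (hvu n).trans (hammOp_eq_kernelOp α β γ δ g f (u n))
  have hCH : 0 ≤ CH := nonneg_of_ae_restrict_abs_le (by simp) hHC
  have hg' : IntegrableOn g (Ioc (0 : ℝ) 1) := hg.mono_set Ioc_subset_Icc_self
  have hhg : ∀ n, ∀ᵐ s ∂volume.restrict (Ioc (0 : ℝ) 1), |h n s| ≤ CH * |g s| := fun n =>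
    ae_abs_mul_le_of_memBallC1 hH hHC (hu n)
  have hh : ∀ n, IntegrableOn (h n) (Ioc (0 : ℝ) 1) := fun n =>
    integrableOn_mul_of_memBallC1 hg hH hHC (hu n) (hmeas _ (hu n))
  have hρ : Integrable ((Ioc (0 : ℝ) 1).indicator fun s => CH * |g s|) :=
    IntegrableOn.integrable_indicator (hg'.abs.const_mul CH) measurableSet_Ioc
  set G : ℝ → ℝ := fun t => ∫ x in (0 : ℝ)..t, (Ioc (0 : ℝ) 1).indicator (fun s => CH * |g s|) x
  have hG : Continuous G := continuous_primitive (fun a b => hρ.intervalIntegrable) 0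
  obtain ⟨K, hK⟩ := exists_abs_greenKt_le α β γ δ
  have hDG : ∀ n a b, |kernelOp (greenKt α β γ δ) (h n) a - kernelOp (greenKt α β γ δ) (h n) b|
      ≤ 2 * K * |G a - G b| := fun n a b => by
    rw [abs_sub_comm (G a), integral_interval_sub_left hρ.intervalIntegrable hρ.intervalIntegrable]
    exact abs_kernelOp_greenKt_sub_le hK (hh n) hg' (hhg n) a b
  obtain ⟨φ, w, hφ, hw, hlim⟩ := exists_subseq_tendsto_normC1 hG.continuousOn
    (fun n t _ => hasDerivAt_of_sub_eq_integral
      ((equicontinuous_of_abs_sub_le hG hDG).continuous n)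
      (fun a b hab => kernelOp_greenK_sub (hh n) hab) t)
    (fun n t ht => abs_kernelOp_greenK_le_Mone hα hβ hγ hδ hΓ hg hCH (hhg n) ht)
    (fun n t ht => abs_kernelOp_greenKt_le_Mtwo hg hCH (hhg n) ht)
    (fun n a _ b _ => hDG n a b)
  exact ⟨φ, w, hφ, hw.mono (by linarith [mul_add CH (Mone α β γ δ g) (Mtwo α β γ δ g)]), hlim⟩

theorem hammOp_image_relatively_compact
    (α β γ δ : ℝ) (hα : 0 ≤ α) (hβ : 0 ≤ β) (hγ : 0 ≤ γ) (hδ : 0 ≤ δ)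
    (hΓ : 0 < γ * β + α * γ + α * δ)
    (g : ℝ → ℝ) (f : ℝ → ℝ → ℝ) (R : ℝ) (hR : 0 < R)
    (H : ℝ → ℝ) (CH : ℝ)
    -- (H₁)
    (hg : IntegrableOn g (Set.Icc (0 : ℝ) 1))
    -- (H₂)
    (hHmeas : Measurable H)
    (hH : ∀ᵐ t ∂(volume.restrict (Set.Icc (0 : ℝ) 1)),
      ∀ x ∈ Set.Icc (-R) R, |f t x| ≤ H t)
    (hHC : ∀ᵐ t ∂(volume.restrict (Set.Icc (0 : ℝ) 1)), |H t| ≤ CH)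
    -- (H₃)
    (hRC : CH * (Mone α β γ δ g + Mtwo α β γ δ g) ≤ R)
    -- (H₄)
    (hmeas : ∀ u : ℝ → ℝ, memBallC1 R u →
      AEMeasurable (fun t => f t (u t)) (volume.restrict (Set.Icc (0 : ℝ) 1))) :
    -- `T(B̄_R)` is relatively compact in `C¹([0,1])`: every sequence in the image
    -- has a subsequence converging in the `C¹` norm.
    ∀ v : ℕ → (ℝ → ℝ), (∀ n, ∃ u : ℝ → ℝ, memBallC1 R u ∧ v n = hammOp α β γ δ g f u) →
      ∃ (φ : ℕ → ℕ) (w : ℝ → ℝ), StrictMono φ ∧ memBallC1 R w ∧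
        Filter.Tendsto (fun n => normC1 (fun t => v (φ n) t - w t))
          Filter.atTop (nhds 0) :=
  hammOp_image_relatively_compact_general α β γ δ hα hβ hγ hδ hΓ g f R H CH hg hH hHC hRC hmeas
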